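/- In the convex setting (CP), let x ∈ 𝒳 with c_i(x) ≤ 0 for all i, and suppose z* ∈ 𝒳 together with μ ∈ ℝ^m_{≥0} and l ∈ ∂r(z*) satisfies the GHMA subproblem KKT conditions at x. Then F(x) − F(z*) ≥ (κ/(κ+1))·(L + Σ_{i=1}^m μ_i L_i)·‖x − z*‖^{κ+1}. -/

import Mathlib

open scoped RealInnerProductSpace
open Real Set

/-- The convex subdifferential of `r` at `u`. -/
def subgrad {n : ℕ} (r : EuclideanSpace ℝ (Fin n) → ℝ)
    (u : EuclideanSpace ℝ (Fin n)) : Set (EuclideanSpace ℝ (Fin n)) :=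
  {l | ∀ z, r u + ⟪l, z - u⟫ ≤ r z}

/-!
Write `d = z* − x` and `T = ‖d‖^{κ+1}`. The Hölder descent lemma gives
`f z* ≤ f x + ⟪∇f x, d⟫ + L/(κ+1) T`, the subgradient inequality at `x` gives
`r z* ≤ r x + ⟪l, d⟫`, and testing stationarity with `z = x` gives
`⟪∇f x + l, d⟫ + Σ μᵢ⟪∇cᵢ x, d⟫ + (L + Σ μᵢLᵢ) T ≤ 0`. Complementarity together with
`cᵢ(x) ≤ 0` bounds `μᵢ⟪∇cᵢ x, d⟫ ≥ −μᵢLᵢ/(κ+1) T`. Adding up, the regularisation terms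
contribute `(L + Σ μᵢLᵢ) T` and the two error terms remove a `1/(κ+1)` fraction of it.
-/

section

variable {E : Type*} [NormedAddCommGroup E] [InnerProductSpace ℝ E]

lemma real_inner_mul_rpow_smul_self (a : ℝ) (d : E) {q : ℝ} (hq : q + 1 ≠ 0) :
    ⟪(a * ‖d‖ ^ (q - 1)) • d, d⟫ = a * ‖d‖ ^ (q + 1) := by
  rw [real_inner_smul_self_left, show q + 1 = q - 1 + 2 by ring,
    rpow_add' (norm_nonneg d) fun h ↦ hq (by linarith), rpow_two]
  ring

lemma inner_holder_kkt_vector_eq {ι : Type*} (s : Finset ι) {κ : ℝ} (hκ : 0 < κ)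
    (g l d : E) (v : ι → E) (μ Li : ι → ℝ) (L : ℝ) :
    ⟪g + (L * ‖d‖ ^ (κ - 1)) • d + (∑ i ∈ s, μ i • (v i + (Li i * ‖d‖ ^ (κ - 1)) • d)) + l, d⟫
      = ⟪g + l, d⟫ + ∑ i ∈ s, μ i * ⟪v i, d⟫ + (L + ∑ i ∈ s, μ i * Li i) * ‖d‖ ^ (κ + 1) := by
  have hq : κ + 1 ≠ 0 := by linarith
  simp only [inner_add_left, sum_inner, real_inner_smul_left,
    real_inner_mul_rpow_smul_self _ _ hq, mul_add, Finset.sum_add_distrib, add_mul,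
    Finset.sum_mul, mul_assoc]
  ring

lemma inner_sub_le_of_holder {g' : E → E} {κ L : ℝ} (hκ : 0 < κ)
    (hh : ∀ a b, ‖g' a - g' b‖ ≤ L * ‖a - b‖ ^ κ) (x d : E) {t : ℝ} (ht : 0 ≤ t) :
    ⟪g' (x + t • d) - g' x, d⟫ ≤ L * t ^ κ * ‖d‖ ^ (κ + 1) :=
  calc ⟪g' (x + t • d) - g' x, d⟫ ≤ ‖g' (x + t • d) - g' x‖ * ‖d‖ := real_inner_le_norm _ _
    _ ≤ L * ‖t • d‖ ^ κ * ‖d‖ := by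
        gcongr
        simpa using hh (x + t • d) x
    _ = L * t ^ κ * ‖d‖ ^ (κ + 1) := by
        rw [norm_smul, norm_of_nonneg ht, mul_rpow ht (norm_nonneg d),
          rpow_add_one' (norm_nonneg d) (by linarith)]
        ring

theorem le_add_inner_add_rpow_of_gradient_holder [CompleteSpace E] {g : E → ℝ} {g' : E → E}
    {κ L : ℝ} (hκ : 0 < κ) (hg : ∀ z, HasGradientAt g (g' z) z)
    (hh : ∀ a b, ‖g' a - g' b‖ ≤ L * ‖a - b‖ ^ κ) (x y : E) :
    g y ≤ g x + ⟪g' x, y - x⟫ + L / (κ + 1) * ‖y - x‖ ^ (κ + 1) := by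
  set d := y - x
  set φ : ℝ → ℝ := fun t ↦
    g (x + t • d) - t * ⟪g' x, d⟫ - L / (κ + 1) * t ^ (κ + 1) * ‖d‖ ^ (κ + 1)
  have hφ : ∀ t, HasDerivAt φ
      (⟪g' (x + t • d), d⟫ - ⟪g' x, d⟫ - L * t ^ κ * ‖d‖ ^ (κ + 1)) t := by
    intro t
    have hline : HasDerivAt (fun s : ℝ ↦ x + s • d) d t := by
      simpa using ((hasDerivAt_id t).smul_const d).const_add x
    have hpow := hasDerivAt_rpow_const (x := t) (p := κ + 1) (Or.inr (by linarith))
    refine ((((hg _).hasFDerivAt.comp_hasDerivAt t hline).sub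
      ((hasDerivAt_id t).mul_const ⟪g' x, d⟫)).sub
      ((hpow.const_mul (L / (κ + 1))).mul_const (‖d‖ ^ (κ + 1)))).congr_deriv ?_
    rw [InnerProductSpace.toDual_apply_apply, add_sub_cancel_right]
    field_simp
  have hanti : AntitoneOn φ (Ici 0) := by
    refine antitoneOn_of_hasDerivWithinAt_nonpos (convex_Ici 0)
      (fun t _ ↦ (hφ t).continuousAt.continuousWithinAt)
      (fun t _ ↦ (hφ t).hasDerivWithinAt) fun t ht ↦ ?_
    rw [interior_Ici] at ht
    have := inner_sub_le_of_holder hκ hh x d ht.le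
    rw [inner_sub_left] at this
    linarith
  have hφ10 := hanti self_mem_Ici (zero_le_one' ℝ) zero_le_one
  simp only [φ, zero_smul, add_zero, zero_mul, sub_zero, one_smul, one_mul, one_rpow, d,
    add_sub_cancel] at hφ10
  rw [zero_rpow (by linarith)] at hφ10
  linarith

end

lemma neg_sum_mul_mul_le_sum_mul_of_complementary {ι : Type*} (s : Finset ι)
    {μ a b K : ι → ℝ} {T : ℝ} (hμ : ∀ i, 0 ≤ μ i) (ha : ∀ i, a i ≤ 0)
    (hcomp : ∀ i, μ i * (a i + b i + K i * T) = 0) :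
    -(∑ i ∈ s, μ i * K i) * T ≤ ∑ i ∈ s, μ i * b i := by
  rw [neg_mul, Finset.sum_mul, ← Finset.sum_neg_distrib]
  refine Finset.sum_le_sum fun i _ ↦ ?_
  nlinarith [mul_nonpos_of_nonneg_of_nonpos (hμ i) (ha i), hcomp i]

theorem ghma_sufficient_descent_general {n m : ℕ}
    (X : Set (EuclideanSpace ℝ (Fin n)))
    (f r : EuclideanSpace ℝ (Fin n) → ℝ)
    (c : Fin m → EuclideanSpace ℝ (Fin n) → ℝ)
    (f' : EuclideanSpace ℝ (Fin n) → EuclideanSpace ℝ (Fin n))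
    (c' : Fin m → EuclideanSpace ℝ (Fin n) → EuclideanSpace ℝ (Fin n))
    (hf : ∀ x, HasGradientAt f (f' x) x)
    (κ L : ℝ) (Li : Fin m → ℝ)
    (hκ0 : 0 < κ)
    (hfholder : ∀ x y, ‖f' x - f' y‖ ≤ L * ‖x - y‖ ^ κ)
    -- a feasible base point
    (x : EuclideanSpace ℝ (Fin n)) (hxX : x ∈ X) (hxfeas : ∀ i, c i x ≤ 0)
    -- KKT conditions of the GHMA subproblem (CP_x)
    (zstar : EuclideanSpace ℝ (Fin n))
    (μ : Fin m → ℝ) (hμ : ∀ i, 0 ≤ μ i)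
    (l : EuclideanSpace ℝ (Fin n)) (hl : l ∈ subgrad r zstar)
    (hstat : ∀ z ∈ X, 0 ≤
      ⟪f' x + (L * ‖zstar - x‖ ^ (κ - 1)) • (zstar - x) +
        (∑ i, μ i • (c' i x + (Li i * ‖zstar - x‖ ^ (κ - 1)) • (zstar - x))) + l,
        z - zstar⟫)
    (hcomp : ∀ i, μ i * (c i x + ⟪c' i x, zstar - x⟫ +
      (Li i / (κ + 1)) * ‖zstar - x‖ ^ (κ + 1)) = 0) :
    (κ / (κ + 1)) * (L + ∑ i, μ i * Li i) * ‖x - zstar‖ ^ (κ + 1) ≤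
      (f x + r x) - (f zstar + r zstar) := by
  set d := zstar - x
  have hxz : x - zstar = -d := (neg_sub zstar x).symm
  have hdesc := le_add_inner_add_rpow_of_gradient_holder hκ0 hf hfholder x zstar
  have hsub : r zstar - ⟪l, d⟫ ≤ r x := by simpa [hxz] using hl x
  have hstat_x := hstat x hxX
  rw [hxz, inner_neg_right, inner_holder_kkt_vector_eq _ hκ0, inner_add_left] at hstat_x
  have hmult := neg_sum_mul_mul_le_sum_mul_of_complementary Finset.univ hμ hxfeas hcomp
  have hsplit : κ / (κ + 1) * (L + ∑ i, μ i * Li i) =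
      L + ∑ i, μ i * Li i - ∑ i, μ i * (Li i / (κ + 1)) - L / (κ + 1) := by
    simp only [mul_div_assoc', ← Finset.sum_div]
    field_simp
    ring
  rw [norm_sub_rev, hsplit]
  linarith

/-- (Lemma 1 in the paper: sufficient descent for GHMA in the convex
setting (CP).)  If `z*` together with multipliers `μ ≥ 0` and `l ∈ ∂r(z*)` satisfies the
KKT conditions of the GHMA subproblem at a feasible `x`, then
`F(x) − F(z*) ≥ (κ/(κ+1))(L + Σᵢ μᵢLᵢ)‖x − z*‖^{κ+1}` where `F = f + r`. -/
theorem ghma_sufficient_descent {n m : ℕ}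
    (X : Set (EuclideanSpace ℝ (Fin n))) (hXconv : Convex ℝ X) (hXclosed : IsClosed X)
    (f r : EuclideanSpace ℝ (Fin n) → ℝ)
    (c : Fin m → EuclideanSpace ℝ (Fin n) → ℝ)
    (f' : EuclideanSpace ℝ (Fin n) → EuclideanSpace ℝ (Fin n))
    (c' : Fin m → EuclideanSpace ℝ (Fin n) → EuclideanSpace ℝ (Fin n))
    (hf : ∀ x, HasGradientAt f (f' x) x)
    (hc : ∀ i x, HasGradientAt (c i) (c' i x) x)
    (hfconv : ConvexOn ℝ univ f) (hcconv : ∀ i, ConvexOn ℝ univ (c i))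
    (hrconv : ConvexOn ℝ univ r)
    (κ L : ℝ) (Li : Fin m → ℝ)
    (hκ0 : 0 < κ) (hκ1 : κ ≤ 1) (hL : 0 < L) (hLi : ∀ i, 0 < Li i)
    (hfholder : ∀ x y, ‖f' x - f' y‖ ≤ L * ‖x - y‖ ^ κ)
    (hcholder : ∀ i x y, ‖c' i x - c' i y‖ ≤ Li i * ‖x - y‖ ^ κ)
    -- a feasible base point
    (x : EuclideanSpace ℝ (Fin n)) (hxX : x ∈ X) (hxfeas : ∀ i, c i x ≤ 0)
    -- KKT conditions of the GHMA subproblem (CP_x)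
    (zstar : EuclideanSpace ℝ (Fin n)) (hzX : zstar ∈ X)
    (μ : Fin m → ℝ) (hμ : ∀ i, 0 ≤ μ i)
    (l : EuclideanSpace ℝ (Fin n)) (hl : l ∈ subgrad r zstar)
    (hstat : ∀ z ∈ X, 0 ≤
      ⟪f' x + (L * ‖zstar - x‖ ^ (κ - 1)) • (zstar - x) +
        (∑ i, μ i • (c' i x + (Li i * ‖zstar - x‖ ^ (κ - 1)) • (zstar - x))) + l,
        z - zstar⟫)
    (hconstr : ∀ i, c i x + ⟪c' i x, zstar - x⟫ +
      (Li i / (κ + 1)) * ‖zstar - x‖ ^ (κ + 1) ≤ 0)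
    (hcomp : ∀ i, μ i * (c i x + ⟪c' i x, zstar - x⟫ +
      (Li i / (κ + 1)) * ‖zstar - x‖ ^ (κ + 1)) = 0) :
    (κ / (κ + 1)) * (L + ∑ i, μ i * Li i) * ‖x - zstar‖ ^ (κ + 1) ≤
      (f x + r x) - (f zstar + r zstar) :=
  ghma_sufficient_descent_general X f r c f' c' hf κ L Li hκ0 hfholder x hxX hxfeas zstar μ hμ l hl
    hstat hcomp
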